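/- arXiv:2207.13042 — 2 statements merged into one kernel-verified Lean document; each statement's English description precedes it below -/
import Mathlib

section
/- Let E be a Banach space and b : E → L(E;ℝ) a map of the form b(x) = ∫_{r}^{∞} e^{−λt} G_t(x) dt where each G_t : E → L(E;ℝ) satisfies, for all x, h ∈ E, ‖G_t(x+2h) − 2G_t(x+h) + G_t(x)‖ ≤ C₃ min(1,t)^{−3/2} M ‖h‖², with r = ‖h‖² ∈ (0,1), λ > 0, C₃ > 0, M ≥ 0. Then ‖b(x+2h) − 2b(x+h) + b(x)‖ ≤ 2C₃(1 + K(λ)) M ‖h‖, where K(λ) = sup_{t>0} t^{3/2} e^{−λt}. -/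
/-!
The second difference commutes with the integral, so it suffices to bound the weight
`e^{-λt} min(1,t)^{-3/2}` by `(1 + K) t^{-3/2}` on `t > 0`: for `t ≤ 1` use `e^{-λt} ≤ 1`, for
`t ≥ 1` use `t^{3/2} e^{-λt} ≤ K`. Then `∫_{‖h‖²}^∞ t^{-3/2} dt = 2 / ‖h‖`, and the factor `‖h‖²`
of the hypothesis leaves `‖h‖`. The supremum `K` is finite because `t^n e^{-λt} ≤ n! / λ^n`.
-/

open MeasureTheory Set Real

theorem rpow_mul_exp_neg_mul_le {p lam t : ℝ} {n : ℕ} (hp : 0 ≤ p) (hpn : p ≤ n)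
    (hlam : 0 < lam) (ht : 0 ≤ t) : t ^ p * exp (-(lam * t)) ≤ 1 + n.factorial / lam ^ n := by
  have hpow : t ^ p ≤ 1 + t ^ n := by
    rcases le_total t 1 with ht1 | ht1
    · linarith [rpow_le_one ht ht1 hp, pow_nonneg ht n]
    · have := rpow_le_rpow_of_exponent_le ht1 hpn
      rw [rpow_natCast] at this
      linarith
  have hpoly : t ^ n ≤ n.factorial / lam ^ n * exp (lam * t) := by
    have := pow_div_factorial_le_exp (lam * t) (mul_nonneg hlam.le ht) n
    rw [mul_pow, div_le_iff₀ (by positivity)] at this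
    rw [div_mul_eq_mul_div, le_div_iff₀ (by positivity)]
    linarith
  have hexp : exp (-(lam * t)) ≤ 1 := exp_le_one_iff.mpr (by nlinarith)
  calc t ^ p * exp (-(lam * t)) ≤ (1 + t ^ n) * exp (-(lam * t)) := by gcongr
    _ ≤ 1 + n.factorial / lam ^ n * exp (lam * t) * exp (-(lam * t)) := by
      rw [add_mul, one_mul]; gcongr
    _ = 1 + n.factorial / lam ^ n := by rw [mul_assoc, ← exp_add, add_neg_cancel, exp_zero, mul_one]

theorem le_sSup_rpow_mul_exp_neg_mul {p lam u : ℝ} (hp : 0 ≤ p) (hlam : 0 < lam) (hu : 0 < u) :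
    u ^ p * exp (-(lam * u))
      ≤ sSup {s : ℝ | ∃ t > (0:ℝ), s = t ^ p * exp (-(lam * t))} :=
  le_csSup ⟨1 + (⌈p⌉₊).factorial / lam ^ ⌈p⌉₊, by
    rintro _ ⟨t, ht, rfl⟩
    exact rpow_mul_exp_neg_mul_le hp (Nat.le_ceil p) hlam ht.le⟩ ⟨u, hu, rfl⟩

theorem exp_neg_mul_mul_min_rpow_neg_le {p lam t K : ℝ} (hlam : 0 ≤ lam) (ht : 0 < t)
    (hK : t ^ p * exp (-(lam * t)) ≤ K) :
    exp (-(lam * t)) * (min 1 t) ^ (-p) ≤ (1 + K) * t ^ (-p) := by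
  have htp : 0 < t ^ (-p) := rpow_pos_of_pos ht _
  have hK0 : 0 ≤ K := le_trans (by positivity) hK
  rcases le_total t 1 with ht1 | ht1
  · rw [min_eq_right ht1]
    have hexp : exp (-(lam * t)) ≤ 1 := exp_le_one_iff.mpr (by nlinarith)
    gcongr
    linarith
  · rw [min_eq_left ht1, one_rpow, mul_one]
    calc exp (-(lam * t)) = t ^ (-p) * (t ^ p * exp (-(lam * t))) := by
          rw [← mul_assoc, ← rpow_add ht, neg_add_cancel, rpow_zero, one_mul]
      _ ≤ t ^ (-p) * K := by gcongr
      _ ≤ (1 + K) * t ^ (-p) := by nlinarith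

theorem integral_sub_two_smul_add {α G : Type*} [MeasurableSpace α] {μ : Measure α}
    [NormedAddCommGroup G] [NormedSpace ℝ G] {f g k : α → G}
    (hf : Integrable f μ) (hg : Integrable g μ) (hk : Integrable k μ) :
    ∫ a, f a ∂μ - 2 • ∫ a, g a ∂μ + ∫ a, k a ∂μ = ∫ a, (f a - 2 • g a + k a) ∂μ := by
  simp only [two_smul]
  rw [integral_add (f := fun a => f a - (g a + g a)) (hf.sub (hg.add hg)) hk,
    integral_sub (g := fun a => g a + g a) hf (hg.add hg), integral_add hg hg]

theorem norm_integral_Ioi_exp_neg_mul_smul_le {F : Type*} [NormedAddCommGroup F]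
    [NormedSpace ℝ F] {p lam r A K : ℝ} {f : ℝ → F} (hp : 1 < p) (hlam : 0 ≤ lam) (hr : 0 < r)
    (hA : 0 ≤ A) (hK : ∀ t > 0, t ^ p * exp (-(lam * t)) ≤ K)
    (hf : ∀ t > 0, ‖f t‖ ≤ A * (min 1 t) ^ (-p)) :
    ‖∫ t in Ioi r, exp (-(lam * t)) • f t‖ ≤ A * (1 + K) * (r ^ (1 - p) / (p - 1)) := by
  have hbound : ∀ t ∈ Ioi r, ‖exp (-(lam * t)) • f t‖ ≤ A * (1 + K) * t ^ (-p) := by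
    intro t ht
    have ht0 : 0 < t := hr.trans ht
    rw [norm_smul, Real.norm_of_nonneg (exp_pos _).le]
    calc exp (-(lam * t)) * ‖f t‖ ≤ exp (-(lam * t)) * (A * (min 1 t) ^ (-p)) := by
          gcongr; exact hf t ht0
      _ = A * (exp (-(lam * t)) * (min 1 t) ^ (-p)) := by ring
      _ ≤ A * ((1 + K) * t ^ (-p)) :=
          mul_le_mul_of_nonneg_left (exp_neg_mul_mul_min_rpow_neg_le hlam ht0 (hK t ht0)) hA
      _ = A * (1 + K) * t ^ (-p) := by ring
  calc ‖∫ t in Ioi r, exp (-(lam * t)) • f t‖ ≤ ∫ t in Ioi r, A * (1 + K) * t ^ (-p) :=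
        norm_integral_le_of_norm_le
          ((integrableOn_Ioi_rpow_of_lt (by linarith) hr).const_mul _)
          ((ae_restrict_iff' measurableSet_Ioi).mpr (Filter.Eventually.of_forall hbound))
    _ = A * (1 + K) * (r ^ (1 - p) / (p - 1)) := by
        rw [integral_const_mul, integral_Ioi_rpow_of_lt (by linarith) hr, ← neg_div_neg_eq,
          neg_neg, neg_add, neg_neg, add_comm, ← sub_eq_add_neg, neg_add_eq_sub]

theorem sq_rpow_one_sub_three_halves_div {a : ℝ} (ha : 0 < a) :
    (a ^ 2) ^ (1 - 3 / 2 : ℝ) / (3 / 2 - 1) = 2 / a := by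
  rw [← rpow_natCast, ← rpow_mul ha.le]
  norm_num [rpow_neg_one]
  ring

theorem stmt_13_general {E : Type*} [NormedAddCommGroup E] [NormedSpace ℝ E]
    (lam C₃ M : ℝ) (hlam : 0 < lam) (hC₃ : 0 < C₃) (hM : 0 ≤ M)
    (G : ℝ → E → (E →L[ℝ] ℝ)) (h : E) (hh : 0 < ‖h‖)
    (hint : ∀ x : E,
      IntegrableOn (fun t => Real.exp (-(lam * t)) • G t x) (Set.Ioi (‖h‖ ^ 2)))
    (hG : ∀ t > (0:ℝ), ∀ x : E,
      ‖G t (x + 2 • h) - 2 • G t (x + h) + G t x‖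
        ≤ C₃ * (min 1 t) ^ (-(3 / 2 : ℝ)) * M * ‖h‖ ^ 2) :
    ∀ x : E,
      ‖(∫ t in Set.Ioi (‖h‖ ^ 2), Real.exp (-(lam * t)) • G t (x + 2 • h))
          - 2 • (∫ t in Set.Ioi (‖h‖ ^ 2), Real.exp (-(lam * t)) • G t (x + h))
          + ∫ t in Set.Ioi (‖h‖ ^ 2), Real.exp (-(lam * t)) • G t x‖
        ≤ 2 * C₃
            * (1 + sSup {s : ℝ | ∃ t > (0:ℝ), s = t ^ ((3:ℝ) / 2) * Real.exp (-(lam * t))})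
            * M * ‖h‖ := by
  intro x
  set K := sSup {s : ℝ | ∃ t > (0:ℝ), s = t ^ ((3:ℝ) / 2) * Real.exp (-(lam * t))}
  have hK : ∀ t > (0:ℝ), t ^ (3 / 2 : ℝ) * Real.exp (-(lam * t)) ≤ K :=
    fun t ht => le_sSup_rpow_mul_exp_neg_mul (by norm_num) hlam ht
  have hbound := norm_integral_Ioi_exp_neg_mul_smul_le (r := ‖h‖ ^ 2) (A := C₃ * M * ‖h‖ ^ 2)
    (f := fun t => G t (x + 2 • h) - 2 • G t (x + h) + G t x) (by norm_num) hlam.le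
    (by positivity) (by positivity) hK fun t ht => (hG t ht x).trans_eq (by ring)
  rw [sq_rpow_one_sub_three_halves_div hh] at hbound
  rw [integral_sub_two_smul_add (hint _) (hint _) (hint _)]
  calc _ = ‖∫ t in Ioi (‖h‖ ^ 2), Real.exp (-(lam * t)) •
          (G t (x + 2 • h) - 2 • G t (x + h) + G t x)‖ := by
        simp only [smul_add, smul_sub, smul_comm (Real.exp _) (2 : ℕ)]
    _ ≤ C₃ * M * ‖h‖ ^ 2 * (1 + K) * (2 / ‖h‖) := hbound
    _ = 2 * C₃ * (1 + K) * M * ‖h‖ := by field_simp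

theorem stmt_13 {E : Type*} [NormedAddCommGroup E] [NormedSpace ℝ E]
    (lam C₃ M : ℝ) (hlam : 0 < lam) (hC₃ : 0 < C₃) (hM : 0 ≤ M)
    (G : ℝ → E → (E →L[ℝ] ℝ)) (h : E) (hh : 0 < ‖h‖) (hh1 : ‖h‖ < 1)
    (hint : ∀ x : E,
      IntegrableOn (fun t => Real.exp (-(lam * t)) • G t x) (Set.Ioi (‖h‖ ^ 2)))
    (hG : ∀ t > (0:ℝ), ∀ x : E,
      ‖G t (x + 2 • h) - 2 • G t (x + h) + G t x‖
        ≤ C₃ * (min 1 t) ^ (-(3 / 2 : ℝ)) * M * ‖h‖ ^ 2) :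
    ∀ x : E,
      ‖(∫ t in Set.Ioi (‖h‖ ^ 2), Real.exp (-(lam * t)) • G t (x + 2 • h))
          - 2 • (∫ t in Set.Ioi (‖h‖ ^ 2), Real.exp (-(lam * t)) • G t (x + h))
          + ∫ t in Set.Ioi (‖h‖ ^ 2), Real.exp (-(lam * t)) • G t x‖
        ≤ 2 * C₃
            * (1 + sSup {s : ℝ | ∃ t > (0:ℝ), s = t ^ ((3:ℝ) / 2) * Real.exp (-(lam * t))})
            * M * ‖h‖ :=
  stmt_13_general lam C₃ M hlam hC₃ hM G h hh hint hG
end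

section
/- Let E be a Banach space, T > 0 fixed, γ ∈ (0,1), α ∈ (0, 2γ/(1+γ)), c_α > 0, M ≥ 0. Suppose for each s > 0 maps G₁(s), G₂(s) from E into L(E;ℝ)-valued and bilinear-valued operators respectively satisfy ‖G₁(s)(x+h) − G₁(s)(x)‖ ≤ 2c_α min(1,s)^{−(1−α)(1+γ)/2} M for all x,h, and G₁(s)(x+h) − G₁(s)(x) = ∫₀¹ G₂(s)(x+σh)(h,·)dσ with ‖G₂(s)(x)‖ ≤ c_α min(1,s)^{−(2−α)(1+γ)/2} M. Then w(x) := ∫₀^T G₁(s)(x) ds satisfies, for all x,h ∈ E with 0 < ‖h‖ < 1: ‖w(x+h) − w(x)‖ ≤ C M ‖h‖^{α + (1−γ)/(1+γ)} with C = c_α ( 4/(2−(1−α)(1+γ)) + 2/((2−α)(1+γ)−2) + max(T−1, 0) ). -/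
/-! Write `f s = G₁ s (x + h) - G₁ s x` and `r = ‖h‖ ^ (2 / (1 + γ))`. On `(0, r]` the crude bound
`‖f s‖ ≲ s ^ (-p)`, `p = (1 - α)(1 + γ)/2 < 1`, is integrable at `0` and contributes `r ^ (1 - p)`;
on `(r, 1]` the mean-value bound `‖f s‖ ≲ ‖h‖ s ^ (-q)`, `q = (2 - α)(1 + γ)/2 > 1`, is integrable
at infinity and contributes `‖h‖ r ^ (1 - q)`; on `[1, T]` it contributes `‖h‖ (T - 1)`. The choice
of `r` makes both `r ^ (1 - p)` and `‖h‖ r ^ (1 - q)` equal to `‖h‖ ^ (α + (1 - γ)/(1 + γ))`, which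
also dominates `‖h‖` since the exponent is at most `1`. -/

open MeasureTheory Set

section RpowPieces

variable {F : Type*} [NormedAddCommGroup F] [NormedSpace ℝ F] {f : ℝ → F}

lemma norm_integral_zero_le_of_norm_le_rpow {K p u : ℝ} (hp : p < 1) (hu : 0 ≤ u)
    (hf : ∀ s ∈ Ioc 0 u, ‖f s‖ ≤ K * s ^ (-p)) :
    ‖∫ s in 0..u, f s‖ ≤ K * (u ^ (1 - p) / (1 - p)) := by
  have hint : IntervalIntegrable (fun s => K * s ^ (-p)) volume 0 u :=
    (intervalIntegral.intervalIntegrable_rpow' (by linarith)).const_mul K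
  have hle := intervalIntegral.norm_integral_le_of_norm_le hu (ae_of_all _ hf) hint
  rwa [intervalIntegral.integral_const_mul, integral_rpow (Or.inl (by linarith)),
    Real.zero_rpow (by linarith), sub_zero, neg_add_eq_sub] at hle

lemma norm_integral_le_of_norm_le_rpow_of_one_lt {K q a b : ℝ} (hK : 0 ≤ K) (hq : 1 < q)
    (ha : 0 < a) (hab : a ≤ b) (hf : ∀ s ∈ Ioc a b, ‖f s‖ ≤ K * s ^ (-q)) :
    ‖∫ s in a..b, f s‖ ≤ K * (a ^ (1 - q) / (q - 1)) := by
  have h0 : (0 : ℝ) ∉ uIcc a b := by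
    rw [uIcc_of_le hab]
    exact fun h => ha.not_ge h.1
  have hint : IntervalIntegrable (fun s => K * s ^ (-q)) volume a b :=
    (intervalIntegral.intervalIntegrable_rpow (Or.inr h0)).const_mul K
  have hle := intervalIntegral.norm_integral_le_of_norm_le hab (ae_of_all _ hf) hint
  rw [intervalIntegral.integral_const_mul, integral_rpow (Or.inr ⟨by linarith, h0⟩),
    neg_add_eq_sub, ← neg_div_neg_eq, neg_sub, neg_sub] at hle
  refine hle.trans (mul_le_mul_of_nonneg_left ?_ hK)
  gcongr
  exact sub_le_self _ (Real.rpow_nonneg (ha.le.trans hab) _)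

lemma norm_integral_le_of_norm_le_rpow_near_zero_of_norm_le_rpow_far {A B p q r T : ℝ}
    (hp : p < 1) (hq : 1 < q) (hr0 : 0 < r) (hr1 : r < 1) (hT : 0 ≤ T)
    (hf : IntervalIntegrable f volume 0 T) (hnear : ∀ s ∈ Ioc 0 1, ‖f s‖ ≤ A * s ^ (-p))
    (hfar : ∀ s > 0, ‖f s‖ ≤ B * min 1 s ^ (-q)) :
    ‖∫ s in 0..T, f s‖ ≤
      A * (r ^ (1 - p) / (1 - p)) + B * (r ^ (1 - q) / (q - 1)) + B * max (T - 1) 0 := by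
  have hA : 0 ≤ A := by simpa using (norm_nonneg _).trans (hnear 1 ⟨one_pos, le_rfl⟩)
  have hB : 0 ≤ B := by simpa using (norm_nonneg _).trans (hfar 1 one_pos)
  have hnear_le (u : ℝ) (hu : 0 ≤ u) (hur : u ≤ r) :
      ‖∫ s in 0..u, f s‖ ≤ A * (r ^ (1 - p) / (1 - p)) := by
    refine (norm_integral_zero_le_of_norm_le_rpow hp hu
      fun s hs => hnear s ⟨hs.1, by linarith [hs.2]⟩).trans ?_
    have : 0 < 1 - p := by linarith
    gcongr
  have hmid_nonneg : 0 ≤ B * (r ^ (1 - q) / (q - 1)) := by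
    have : 0 < q - 1 := by linarith
    positivity
  have htail_nonneg : 0 ≤ B * max (T - 1) 0 := by positivity
  rcases le_or_gt T r with hTr | hrT
  · linarith [hnear_le T hT hTr]
  set b := min T 1 with hb
  have hrb : r ≤ b := le_min hrT.le hr1.le
  have hbT : b ≤ T := min_le_left _ _
  have hsub (c d : ℝ) (hc : 0 ≤ c) (hcd : c ≤ d) (hd : d ≤ T) :
      IntervalIntegrable f volume c d :=
    hf.mono_set (by rw [uIcc_of_le hcd, uIcc_of_le hT]; exact Icc_subset_Icc hc hd)
  have hmid : ‖∫ s in r..b, f s‖ ≤ B * (r ^ (1 - q) / (q - 1)) :=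
    norm_integral_le_of_norm_le_rpow_of_one_lt hB hq hr0 hrb fun s hs => by
      simpa [min_eq_right (hs.2.trans (min_le_right _ _))] using hfar s (hr0.trans hs.1)
  have htail : ‖∫ s in b..T, f s‖ ≤ B * max (T - 1) 0 := by
    have hle : ∀ s ∈ uIoc b T, ‖f s‖ ≤ B := by
      rw [uIoc_of_le hbT]
      intro s hs
      have h1s : 1 < s := by
        rcases min_lt_iff.mp hs.1 with h | h
        · exact absurd hs.2 h.not_ge
        · exact h
      simpa [min_eq_left h1s.le] using hfar s (one_pos.trans h1s)
    refine (intervalIntegral.norm_integral_le_of_norm_le_const hle).trans_eq ?_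
    rw [abs_of_nonneg (sub_nonneg.mpr hbT), hb, ← max_sub_sub_left, sub_self, max_comm]
  rw [← intervalIntegral.integral_add_adjacent_intervals (hsub 0 r le_rfl hr0.le hrT.le)
      (hsub r T hr0.le hrT.le le_rfl),
    ← intervalIntegral.integral_add_adjacent_intervals (hsub r b hr0.le hrb hbT)
      (hsub b T (hr0.le.trans hrb) hbT le_rfl)]
  calc _ ≤ ‖∫ s in 0..r, f s‖ + (‖∫ s in r..b, f s‖ + ‖∫ s in b..T, f s‖) :=
        (norm_add_le _ _).trans (by gcongr; exact norm_add_le _ _)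
    _ ≤ _ := by linarith [hnear_le r hr0.le le_rfl]

end RpowPieces

lemma norm_integral_zero_one_apply_le {E F : Type*} [NormedAddCommGroup E] [NormedSpace ℝ E]
    [NormedAddCommGroup F] [NormedSpace ℝ F] {L : ℝ → E →L[ℝ] F} {C : ℝ} (hL : ∀ σ, ‖L σ‖ ≤ C)
    (v : E) : ‖∫ σ in (0 : ℝ)..1, L σ v‖ ≤ C * ‖v‖ := by
  simpa using intervalIntegral.norm_integral_le_of_norm_le_const (a := 0) (b := 1) fun σ _ =>
    (L σ).le_of_opNorm_le (hL σ) v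

lemma exponent_bounds_of_mem_Ioo {γ α : ℝ} (hγ : γ ∈ Ioo (0 : ℝ) 1)
    (hα : α ∈ Ioo (0 : ℝ) (2 * γ / (1 + γ))) :
    (1 - α) * (1 + γ) / 2 < 1 ∧ 1 < (2 - α) * (1 + γ) / 2 ∧ α + (1 - γ) / (1 + γ) ≤ 1 := by
  obtain ⟨hγ0, hγ1⟩ := hγ
  obtain ⟨hα0, hα2⟩ := hα
  have h1γ : 0 < 1 + γ := by linarith
  have hαγ : α * (1 + γ) < 2 * γ := (lt_div_iff₀ h1γ).mp hα2
  refine ⟨by nlinarith, by nlinarith, ?_⟩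
  rw [← le_sub_iff_add_le', div_le_iff₀ h1γ]
  nlinarith

lemma rpow_two_div_one_add_rpow_eq {t γ α : ℝ} (ht : 0 < t) (hγ : 1 + γ ≠ 0) :
    (t ^ (2 / (1 + γ))) ^ (1 - (1 - α) * (1 + γ) / 2) = t ^ (α + (1 - γ) / (1 + γ)) ∧
      t * (t ^ (2 / (1 + γ))) ^ (1 - (2 - α) * (1 + γ) / 2) = t ^ (α + (1 - γ) / (1 + γ)) := by
  rw [← Real.rpow_mul ht.le, ← Real.rpow_mul ht.le]
  constructor
  · congr 1
    field_simp
    ring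
  · rw [mul_comm, ← Real.rpow_add_one ht.ne']
    congr 1
    field_simp
    ring

theorem stmt_17 {E : Type*} [NormedAddCommGroup E] [NormedSpace ℝ E]
    (T γ α cα M : ℝ) (hT : 0 < T) (hγ : γ ∈ Set.Ioo (0:ℝ) 1)
    (hα : α ∈ Set.Ioo (0:ℝ) (2 * γ / (1 + γ))) (hcα : 0 < cα) (hM : 0 ≤ M)
    (G₁ : ℝ → E → (E →L[ℝ] ℝ)) (G₂ : ℝ → E → (E →L[ℝ] E →L[ℝ] ℝ))
    (h1 : ∀ s > (0:ℝ), ∀ x h : E,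
      ‖G₁ s (x + h) - G₁ s x‖ ≤ 2 * cα * (min 1 s) ^ (-((1 - α) * (1 + γ) / 2)) * M)
    (hrep : ∀ s > (0:ℝ), ∀ x h : E,
      G₁ s (x + h) - G₁ s x = ∫ σ in (0:ℝ)..1, (G₂ s (x + σ • h)) h)
    (h2 : ∀ s > (0:ℝ), ∀ x : E,
      ‖G₂ s x‖ ≤ cα * (min 1 s) ^ (-((2 - α) * (1 + γ) / 2)) * M)
    (hint : ∀ x : E, IntervalIntegrable (fun s => G₁ s x) volume 0 T) :
    ∀ x h : E, 0 < ‖h‖ → ‖h‖ < 1 →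
      ‖(∫ s in (0:ℝ)..T, G₁ s (x + h)) - ∫ s in (0:ℝ)..T, G₁ s x‖
        ≤ cα * (4 / (2 - (1 - α) * (1 + γ)) + 2 / ((2 - α) * (1 + γ) - 2) + max (T - 1) 0)
            * M * ‖h‖ ^ (α + (1 - γ) / (1 + γ)) := by
  intro x h hh0 hh1
  have h1γ : 0 < 1 + γ := by linarith [hγ.1]
  obtain ⟨hp, hq, hβ⟩ := exponent_bounds_of_mem_Ioo hγ hα
  obtain ⟨hnear_exp, hmid_exp⟩ := rpow_two_div_one_add_rpow_eq (α := α) hh0 h1γ.ne'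
  have hh_le : ‖h‖ ≤ ‖h‖ ^ (α + (1 - γ) / (1 + γ)) := by
    simpa using Real.rpow_le_rpow_of_exponent_ge hh0 hh1.le hβ
  have hp_ne : 2 - (1 - α) * (1 + γ) ≠ 0 := by linarith
  have hq_ne : (2 - α) * (1 + γ) - 2 ≠ 0 := by linarith
  set p := (1 - α) * (1 + γ) / 2
  set q := (2 - α) * (1 + γ) / 2
  set r := ‖h‖ ^ (2 / (1 + γ))
  have hdiff (s : ℝ) (hs : 0 < s) :
      ‖G₁ s (x + h) - G₁ s x‖ ≤ cα * M * ‖h‖ * min 1 s ^ (-q) := by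
    rw [hrep s hs x h, mul_right_comm _ ‖h‖, mul_right_comm cα]
    exact norm_integral_zero_one_apply_le (fun σ => h2 s hs (x + σ • h)) h
  have key := norm_integral_le_of_norm_le_rpow_near_zero_of_norm_le_rpow_far
    (f := fun s => G₁ s (x + h) - G₁ s x) (A := 2 * cα * M) hp hq
    (Real.rpow_pos_of_pos hh0 _) (Real.rpow_lt_one (norm_nonneg h) hh1 (div_pos two_pos h1γ))
    hT.le ((hint _).sub (hint x))
    (fun s hs => (h1 s hs.1 x h).trans_eq (by rw [min_eq_right hs.2]; ring)) hdiff
  rw [← intervalIntegral.integral_sub (hint (x + h)) (hint x)]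
  calc _ ≤ _ := key
    _ ≤ 2 * cα * M * (r ^ (1 - p) / (1 - p)) + cα * M * ‖h‖ * (r ^ (1 - q) / (q - 1))
        + cα * M * ‖h‖ ^ (α + (1 - γ) / (1 + γ)) * max (T - 1) 0 := by gcongr
    _ = _ := by
      rw [hnear_exp, mul_div_assoc', mul_assoc _ ‖h‖, mul_div_assoc', hmid_exp]
      simp only [p, q]
      field_simp
      ring
end
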